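/- arXiv:2403.16369 — 2 statements merged into one kernel-verified Lean document; each statement's English description precedes it below -/
import Mathlib

section
/- Let F be the operator on bounded pseudometrics defined by F(d)(s_i, s_j) = d_ss(s_i, s_j) + c · E_{a∼U(A)}[W_1(d)(P(·|s_i,a), P(·|s_j,a))]. Then for any two bounded pseudometrics d, d', it holds that ‖F(d) − F(d')‖_∞ ≤ c · ‖d − d'‖_∞; i.e., F is a contraction with modulus c when 0 ≤ c < 1. -/
open scoped BigOperators Classical

noncomputable section

def IsPMF {S : Type*} [Fintype S] (μ : S → ℝ) : Prop :=
  (∀ x, 0 ≤ μ x) ∧ ∑ x, μ x = 1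

def IsPseudometric {S : Type*} (d : S → S → ℝ) : Prop :=
  (∀ x y, 0 ≤ d x y) ∧ (∀ x, d x x = 0) ∧ (∀ x y, d x y = d y x) ∧
    ∀ x y z, d x z ≤ d x y + d y z

def IsCoupling {S : Type*} [Fintype S] (μ ν : S → ℝ) (γ : S → S → ℝ) : Prop :=
  (∀ x y, 0 ≤ γ x y) ∧ (∀ x, ∑ y, γ x y = μ x) ∧ ∀ y, ∑ x, γ x y = ν y

/-- 1-Wasserstein distance with cost `d` between finitely supported distributions,
as the infimum of the transport cost over couplings. -/
def W1 {S : Type*} [Fintype S] (d : S → S → ℝ) (μ ν : S → ℝ) : ℝ :=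
  sInf {r : ℝ | ∃ γ : S → S → ℝ, IsCoupling μ ν γ ∧ r = ∑ x, ∑ y, d x y * γ x y}

/-- Sup-norm distance between two functions `S × S → ℝ`. -/
def supDist {S : Type*} [Fintype S] (d d' : S → S → ℝ) : ℝ :=
  ⨆ p : S × S, |d p.1 p.2 - d' p.1 p.2|

/-- Expectation of `g` under the uniform distribution over the finite type `A`. -/
def avgA {A : Type*} [Fintype A] (g : A → ℝ) : ℝ :=
  (∑ a, g a) / (Fintype.card A : ℝ)

/-- The action-bisimulation operator with base distance `dss`. -/
def Fop {S A : Type*} [Fintype S] [Fintype A] (dss : S → S → ℝ) (c : ℝ)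
    (P : S → A → S → ℝ) (d : S → S → ℝ) : S → S → ℝ :=
  fun si sj => dss si sj + c * avgA fun a => W1 d (P si a) (P sj a)

/-- Pushforward probability: `P(f(ω) = x)` under distribution `μ`. -/
def pmap {Ω X : Type*} [Fintype Ω] (μ : Ω → ℝ) (f : Ω → X) (x : X) : ℝ :=
  ∑ ω, if f ω = x then μ ω else 0

/-- Shannon mutual information `I(f(ω); g(ω))` under distribution `μ` on a finite space. -/
def mutInfo {Ω X Y : Type*} [Fintype Ω] [Fintype X] [Fintype Y]
    (μ : Ω → ℝ) (f : Ω → X) (g : Ω → Y) : ℝ :=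
  ∑ x, ∑ y, pmap μ (fun ω => (f ω, g ω)) (x, y) *
    Real.log (pmap μ (fun ω => (f ω, g ω)) (x, y) / (pmap μ f x * pmap μ g y))

/-- ℓ1 distance on `ℝ^m`. -/
def l1 {m : ℕ} (x y : Fin m → ℝ) : ℝ := ∑ i, |x i - y i|

/-- Bayesian posterior over actions given two consecutive states, under uniform actions. -/
def post {S A : Type*} [Fintype A] (P : S → A → S → ℝ) (a : A) (s s' : S) : ℝ :=
  (P s a s' / (Fintype.card A : ℝ)) / (∑ b, P s b s' / (Fintype.card A : ℝ))

/-- Conditional distribution of the action given `g(ω) = x`, under joint `ν`. -/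
def condA {Ω A X : Type*} [Fintype Ω] (ν : Ω → ℝ) (act : Ω → A) (g : Ω → X)
    (a : A) (x : X) : ℝ :=
  pmap ν (fun ω => (act ω, g ω)) (a, x) / pmap ν g x

/-- Apply a finite action sequence through deterministic dynamics `f`. -/
def applySeq {S A : Type*} (f : S → A → S) {t : ℕ} (w : Fin t → A) (s : S) : S :=
  (List.ofFn w).foldl f s

/-- Expected ℓ1 distance of encodings after `t` i.i.d. uniform random actions
applied in parallel from `si` and `sj`. -/
def Eterm {S A : Type*} [Fintype A] {m : ℕ} (f : S → A → S) (ψ : S → Fin m → ℝ)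
    (t : ℕ) (si sj : S) : ℝ :=
  (∑ w : Fin t → A, l1 (ψ (applySeq f w si)) (ψ (applySeq f w sj))) /
    (Fintype.card A : ℝ) ^ t

/-- Dirac point mass at `x`. -/
def dirac {S : Type*} [Fintype S] (x : S) : S → ℝ := fun y => if y = x then 1 else 0

lemma W1_set_nonempty {S : Type*} [Fintype S] (d : S → S → ℝ) {μ ν : S → ℝ}
    (hμ : IsPMF μ) (hν : IsPMF ν) :
    ∃ r, r ∈ {r : ℝ | ∃ γ : S → S → ℝ, IsCoupling μ ν γ ∧ r = ∑ x, ∑ y, d x y * γ x y} := by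
  refine ⟨_, fun x y => μ x * ν y, ⟨fun x y => mul_nonneg (hμ.1 x) (hν.1 y), ?_, ?_⟩, rfl⟩
  · intro x; rw [← Finset.mul_sum, hν.2, mul_one]
  · intro y; rw [← Finset.sum_mul, hμ.2, one_mul]

lemma W1_set_bddBelow {S : Type*} [Fintype S] {d : S → S → ℝ} (hd0 : ∀ x y, 0 ≤ d x y)
    (μ ν : S → ℝ) :
    BddBelow {r : ℝ | ∃ γ : S → S → ℝ, IsCoupling μ ν γ ∧ r = ∑ x, ∑ y, d x y * γ x y} := by
  refine ⟨0, ?_⟩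
  rintro r ⟨γ, hγ, rfl⟩
  exact Finset.sum_nonneg fun x _ => Finset.sum_nonneg fun y _ =>
    mul_nonneg (hd0 x y) (hγ.1 x y)

lemma W1_le_add {S : Type*} [Fintype S] {d d' : S → S → ℝ}
    (hd0 : ∀ x y, 0 ≤ d x y) {μ ν : S → ℝ} (hμ : IsPMF μ) (hν : IsPMF ν)
    {K : ℝ} (h : ∀ x y, d x y ≤ d' x y + K) :
    W1 d μ ν ≤ W1 d' μ ν + K := by
  rw [W1, ← sub_le_iff_le_add]
  apply le_csInf (W1_set_nonempty d' hμ hν)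
  rintro r ⟨γ, hγ, rfl⟩
  rw [sub_le_iff_le_add]
  have htot : ∑ x, ∑ y, γ x y = 1 := by
    have := hγ.2.1
    simp only [this]; exact hμ.2
  have h1 : W1 d μ ν ≤ ∑ x, ∑ y, d x y * γ x y :=
    csInf_le (W1_set_bddBelow hd0 μ ν) ⟨γ, hγ, rfl⟩
  refine h1.trans ?_
  have h2 : ∑ x, ∑ y, d x y * γ x y ≤ ∑ x, ∑ y, (d' x y * γ x y + K * γ x y) := by
    refine Finset.sum_le_sum fun x _ => Finset.sum_le_sum fun y _ => ?_
    have := mul_le_mul_of_nonneg_right (h x y) (hγ.1 x y)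
    linarith [this]
  refine h2.trans ?_
  rw [show ∑ x, ∑ y, (d' x y * γ x y + K * γ x y)
      = (∑ x, ∑ y, d' x y * γ x y) + K * (∑ x, ∑ y, γ x y) by
    simp [Finset.sum_add_distrib, Finset.mul_sum]]
  rw [htot, mul_one]

lemma abs_W1_sub_le {S : Type*} [Fintype S] {d d' : S → S → ℝ}
    (hd0 : ∀ x y, 0 ≤ d x y) (hd0' : ∀ x y, 0 ≤ d' x y)
    {μ ν : S → ℝ} (hμ : IsPMF μ) (hν : IsPMF ν)
    {K : ℝ} (h : ∀ x y, |d x y - d' x y| ≤ K) :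
    |W1 d μ ν - W1 d' μ ν| ≤ K := by
  rw [abs_sub_le_iff]
  constructor
  · have := W1_le_add hd0 hμ hν (d' := d') (K := K)
      (fun x y => by have := (abs_le.mp (h x y)).2; linarith)
    linarith
  · have := W1_le_add hd0' hμ hν (d' := d) (K := K)
      (fun x y => by have := (abs_le.mp (h x y)).1; linarith)
    linarith

theorem stmt1 {S A : Type*} [Fintype S] [Nonempty S] [Fintype A] [Nonempty A]
    (P : S → A → S → ℝ) (hP : ∀ s a, IsPMF (P s a))
    (dss : S → S → ℝ) (hdss : ∀ x y, 0 ≤ dss x y)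
    (c : ℝ) (hc0 : 0 ≤ c) (hc1 : c < 1)
    (d d' : S → S → ℝ) (hd : IsPseudometric d) (hd' : IsPseudometric d') :
    supDist (Fop dss c P d) (Fop dss c P d') ≤ c * supDist d d' := by
  set K := supDist d d' with hK
  have hbd : ∀ x y, |d x y - d' x y| ≤ K := by
    intro x y
    exact le_ciSup (f := fun p : S × S => |d p.1 p.2 - d' p.1 p.2|)
      (Set.Finite.bddAbove (Set.finite_range _)) (x, y)
  have hW : ∀ si sj a, |W1 d (P si a) (P sj a) - W1 d' (P si a) (P sj a)| ≤ K :=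
    fun si sj a => abs_W1_sub_le hd.1 hd'.1 (hP si a) (hP sj a) hbd
  refine ciSup_le fun p => ?_
  obtain ⟨si, sj⟩ := p
  show |Fop dss c P d si sj - Fop dss c P d' si sj| ≤ c * K
  have hcard : (0:ℝ) < (Fintype.card A : ℝ) := by
    exact_mod_cast Fintype.card_pos
  have havg : |avgA (fun a => W1 d (P si a) (P sj a)) -
      avgA (fun a => W1 d' (P si a) (P sj a))| ≤ K := by
    rw [avgA, avgA, div_sub_div_same, ← Finset.sum_sub_distrib, abs_div,
      abs_of_pos hcard, div_le_iff₀ hcard]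
    calc |∑ a, (W1 d (P si a) (P sj a) - W1 d' (P si a) (P sj a))|
        ≤ ∑ a, |W1 d (P si a) (P sj a) - W1 d' (P si a) (P sj a)| :=
          Finset.abs_sum_le_sum_abs _ _
      _ ≤ ∑ _a : A, K := Finset.sum_le_sum fun a _ => hW si sj a
      _ = K * (Fintype.card A : ℝ) := by simp [mul_comm]
  have heq : Fop dss c P d si sj - Fop dss c P d' si sj
      = c * (avgA (fun a => W1 d (P si a) (P sj a)) -
          avgA (fun a => W1 d' (P si a) (P sj a))) := by
    simp [Fop]; ring
  rw [heq, abs_mul, abs_of_nonneg hc0]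
  exact mul_le_mul_of_nonneg_left havg hc0
end
end

section
/- Let d_0 be a bounded pseudometric with d_0(s_i, s_j) = 0 whenever s_i and s_j agree on their controllable component, and define d_{n+1}(s_i, s_j) = (1−c)·d_0(s_i, s_j) + c·E_{a∼U(A)}[W_1(d_n)(P(·|s_i,a), P(·|s_j,a))]. Under the factored dynamics, for every n, d_n(s_i, s_j) = 0 whenever s_i^c = s_j^c; consequently, the fixed point d* also satisfies d*(s_i, s_j) = 0 whenever s_i^c = s_j^c. -/
open scoped BigOperators Classical

noncomputable section

section myaux
variable {Sc Su : Type*} [Fintype Sc] [Fintype Su]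

lemma myW1_nonneg {S : Type*} [Fintype S] {d : S → S → ℝ} (hd : ∀ x y, 0 ≤ d x y)
    (μ ν : S → ℝ) : 0 ≤ W1 d μ ν := by
  apply Real.sInf_nonneg
  rintro r ⟨γ, ⟨hγ0, _, _⟩, rfl⟩
  exact Finset.sum_nonneg fun x _ => Finset.sum_nonneg fun y _ =>
    mul_nonneg (hd x y) (hγ0 x y)

lemma mycoupling (f : Sc → ℝ) (g h : Su → ℝ) (hf0 : ∀ x, 0 ≤ f x)
    (hg0 : ∀ x, 0 ≤ g x) (hh0 : ∀ x, 0 ≤ h x)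
    (hg1 : ∑ x, g x = 1) (hh1 : ∑ x, h x = 1) :
    IsCoupling (fun x : Sc × Su => f x.1 * g x.2) (fun x : Sc × Su => f x.1 * h x.2)
      (fun x y : Sc × Su => if x.1 = y.1 then f x.1 * g x.2 * h y.2 else 0) := by
  refine ⟨fun x y => ?_, fun x => ?_, fun y => ?_⟩
  · dsimp only; split
    · exact mul_nonneg (mul_nonneg (hf0 _) (hg0 _)) (hh0 _)
    · exact le_refl 0
  · rw [Fintype.sum_prod_type]
    have h1 : ∀ y1 : Sc, (∑ y2, if x.1 = y1 then f x.1 * g x.2 * h y2 else 0)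
        = if x.1 = y1 then f x.1 * g x.2 else 0 := by
      intro y1; split
      · rw [← Finset.mul_sum, hh1, mul_one]
      · simp
    simp only [h1, Finset.sum_ite_eq, Finset.mem_univ, if_true]
  · rw [Fintype.sum_prod_type]
    have h1 : ∀ x1 : Sc, (∑ x2, if x1 = y.1 then f x1 * g x2 * h y.2 else 0)
        = if x1 = y.1 then f x1 * h y.2 else 0 := by
      intro x1; split
      · have : ∀ x2, f x1 * g x2 * h y.2 = (f x1 * h y.2) * g x2 := fun _ => by ring
        simp_rw [this]
        rw [← Finset.mul_sum, hg1, mul_one]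
      · simp
    simp only [h1, Finset.sum_ite_eq', Finset.mem_univ, if_true]

lemma mycoupling_mass (f : Sc → ℝ) (g h : Su → ℝ) (hf1 : ∑ x, f x = 1)
    (hg1 : ∑ x, g x = 1) (hh1 : ∑ x, h x = 1) :
    ∑ x : Sc × Su, ∑ y : Sc × Su,
      (if x.1 = y.1 then f x.1 * g x.2 * h y.2 else 0) = 1 := by
  have h1 : ∀ x : Sc × Su, (∑ y : Sc × Su,
      if x.1 = y.1 then f x.1 * g x.2 * h y.2 else 0) = f x.1 * g x.2 := by
    intro x
    rw [Fintype.sum_prod_type]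
    have h2 : ∀ y1 : Sc, (∑ y2, if x.1 = y1 then f x.1 * g x.2 * h y2 else 0)
        = if x.1 = y1 then f x.1 * g x.2 else 0 := by
      intro y1; split
      · rw [← Finset.mul_sum, hh1, mul_one]
      · simp
    simp only [h2, Finset.sum_ite_eq, Finset.mem_univ, if_true]
  simp only [h1]
  rw [Fintype.sum_prod_type]
  have : ∀ x1, ∑ x2, f x1 * g x2 = f x1 := fun x1 => by
    rw [← Finset.mul_sum, hg1, mul_one]
  simp only [this, hf1]

/-- W1 between factored distributions with same controllable marginal is at most M,
provided d ≤ M on first-coordinate-equal pairs and d ≥ 0. -/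
lemma myW1_le (d : Sc × Su → Sc × Su → ℝ) (M : ℝ)
    (hd0 : ∀ x y, 0 ≤ d x y) (hdM : ∀ x y : Sc × Su, x.1 = y.1 → d x y ≤ M)
    (f : Sc → ℝ) (g h : Su → ℝ) (hf : IsPMF f) (hg : IsPMF g) (hh : IsPMF h) :
    W1 d (fun x : Sc × Su => f x.1 * g x.2) (fun x : Sc × Su => f x.1 * h x.2) ≤ M := by
  set γ : Sc × Su → Sc × Su → ℝ :=
    fun x y => if x.1 = y.1 then f x.1 * g x.2 * h y.2 else 0 with hγ
  have hcoup := mycoupling f g h hf.1 hg.1 hh.1 hg.2 hh.2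
  have hmem : (∑ x, ∑ y, d x y * γ x y) ∈
      {r : ℝ | ∃ γ' : Sc × Su → Sc × Su → ℝ,
        IsCoupling (fun x : Sc × Su => f x.1 * g x.2) (fun x : Sc × Su => f x.1 * h x.2) γ'
          ∧ r = ∑ x, ∑ y, d x y * γ' x y} := ⟨γ, hcoup, rfl⟩
  have hbdd : BddBelow {r : ℝ | ∃ γ' : Sc × Su → Sc × Su → ℝ,
      IsCoupling (fun x : Sc × Su => f x.1 * g x.2) (fun x : Sc × Su => f x.1 * h x.2) γ'
        ∧ r = ∑ x, ∑ y, d x y * γ' x y} := by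
    refine ⟨0, ?_⟩
    rintro r ⟨γ', ⟨hγ0, _, _⟩, rfl⟩
    exact Finset.sum_nonneg fun x _ => Finset.sum_nonneg fun y _ =>
      mul_nonneg (hd0 x y) (hγ0 x y)
  have hle : W1 d (fun x : Sc × Su => f x.1 * g x.2) (fun x : Sc × Su => f x.1 * h x.2)
      ≤ ∑ x, ∑ y, d x y * γ x y := csInf_le hbdd hmem
  refine hle.trans ?_
  have hcost : (∑ x, ∑ y, d x y * γ x y) ≤ M * ∑ x, ∑ y, γ x y := by
    rw [Finset.mul_sum]
    refine Finset.sum_le_sum fun x _ => ?_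
    rw [Finset.mul_sum]
    refine Finset.sum_le_sum fun y _ => ?_
    by_cases hxy : x.1 = y.1
    · exact mul_le_mul_of_nonneg_right (hdM x y hxy) (hcoup.1 x y)
    · simp [hγ, hxy]
  have hmass := mycoupling_mass f g h hf.2 hg.2 hh.2
  calc (∑ x, ∑ y, d x y * γ x y) ≤ M * ∑ x, ∑ y, γ x y := hcost
    _ = M := by rw [hγ] at *; rw [hmass, mul_one]

lemma myW1_zero (d : Sc × Su → Sc × Su → ℝ)
    (hd0 : ∀ x y, 0 ≤ d x y) (hdz : ∀ x y : Sc × Su, x.1 = y.1 → d x y = 0)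
    (f : Sc → ℝ) (g h : Su → ℝ) (hf : IsPMF f) (hg : IsPMF g) (hh : IsPMF h) :
    W1 d (fun x : Sc × Su => f x.1 * g x.2) (fun x : Sc × Su => f x.1 * h x.2) = 0 :=
  le_antisymm (myW1_le d 0 hd0 (fun x y hxy => le_of_eq (hdz x y hxy)) f g h hf hg hh)
    (myW1_nonneg hd0 _ _)

lemma myavg_nonneg {A : Type*} [Fintype A] {g : A → ℝ} (hg : ∀ a, 0 ≤ g a) :
    0 ≤ avgA g :=
  div_nonneg (Finset.sum_nonneg fun a _ => hg a) (Nat.cast_nonneg _)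

lemma myavg_le {A : Type*} [Fintype A] [Nonempty A] {g : A → ℝ} {M : ℝ}
    (hg : ∀ a, g a ≤ M) : avgA g ≤ M := by
  have hcard : (0 : ℝ) < (Fintype.card A : ℝ) := by
    exact_mod_cast Fintype.card_pos
  rw [avgA, div_le_iff₀ hcard]
  calc (∑ a, g a) ≤ ∑ _a : A, M := Finset.sum_le_sum fun a _ => hg a
    _ = M * (Fintype.card A : ℝ) := by simp [mul_comm]

end myaux

theorem stmt8 {Sc Su A : Type*} [Fintype Sc] [Fintype Su] [Fintype A] [Nonempty A]
    (Pc : Sc → A → Sc → ℝ) (Pu : Su → Su → ℝ)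
    (hPc : ∀ sc a, IsPMF (Pc sc a)) (hPu : ∀ su, IsPMF (Pu su))
    (P : Sc × Su → A → Sc × Su → ℝ)
    (hfac : ∀ s a s', P s a s' = Pc s.1 a s'.1 * Pu s.2 s'.2)
    (c : ℝ) (hc0 : 0 ≤ c) (hc1 : c < 1)
    (d0 : Sc × Su → Sc × Su → ℝ) (hd0 : IsPseudometric d0)
    (hd0c : ∀ si sj : Sc × Su, si.1 = sj.1 → d0 si sj = 0)
    (dseq : ℕ → Sc × Su → Sc × Su → ℝ) (hinit : dseq 0 = d0)
    (hrec : ∀ n si sj, dseq (n + 1) si sj =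
      (1 - c) * d0 si sj + c * avgA fun a => W1 (dseq n) (P si a) (P sj a))
    (dstar : Sc × Su → Sc × Su → ℝ) (hstar : IsPseudometric dstar)
    (hfix : ∀ si sj, dstar si sj =
      (1 - c) * d0 si sj + c * avgA fun a => W1 dstar (P si a) (P sj a)) :
    (∀ n (si sj : Sc × Su), si.1 = sj.1 → dseq n si sj = 0) ∧
      ∀ si sj : Sc × Su, si.1 = sj.1 → dstar si sj = 0 := by
  have hPmu : ∀ (s : Sc × Su) (a : A),
      P s a = fun x : Sc × Su => Pc s.1 a x.1 * Pu s.2 x.2 := by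
    intro s a; funext x; exact hfac s a x
  have hnonneg : ∀ n x y, 0 ≤ dseq n x y := by
    intro n; induction n with
    | zero => intro x y; rw [hinit]; exact hd0.1 x y
    | succ n ih =>
      intro x y; rw [hrec]
      have h1 : 0 ≤ (1 - c) * d0 x y := mul_nonneg (by linarith) (hd0.1 x y)
      have h2 : 0 ≤ avgA fun a => W1 (dseq n) (P x a) (P y a) :=
        myavg_nonneg fun a => myW1_nonneg ih _ _
      have h3 : 0 ≤ c * avgA fun a => W1 (dseq n) (P x a) (P y a) := mul_nonneg hc0 h2
      linarith
  have part1 : ∀ n (si sj : Sc × Su), si.1 = sj.1 → dseq n si sj = 0 := by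
    intro n; induction n with
    | zero => intro si sj hij; rw [hinit]; exact hd0c si sj hij
    | succ n ih =>
      intro si sj hij
      rw [hrec, hd0c si sj hij, mul_zero, zero_add]
      have hW : ∀ a, W1 (dseq n) (P si a) (P sj a) = 0 := by
        intro a
        rw [hPmu si a, hPmu sj a, hij]
        exact myW1_zero _ (hnonneg n) ih (Pc sj.1 a) (Pu si.2) (Pu sj.2)
          (hPc _ _) (hPu _) (hPu _)
      simp [hW, avgA]
  refine ⟨part1, ?_⟩
  intro si sj hij
  have hne : Nonempty (Sc × Su) := ⟨si⟩
  set gfun : (Sc × Su) × (Sc × Su) → ℝ :=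
    fun p => if p.1.1 = p.2.1 then dstar p.1 p.2 else 0 with hgfun
  obtain ⟨p0, -, hp0⟩ :=
    Finset.exists_max_image Finset.univ gfun ⟨(si, si), Finset.mem_univ _⟩
  set M := gfun p0 with hM
  have hM0 : 0 ≤ M := by
    have h := hp0 (si, si) (Finset.mem_univ _)
    have hg : gfun (si, si) = 0 := by simp [hgfun, hstar.2.1]
    rw [hg] at h; exact h
  have hMle : ∀ x y : Sc × Su, x.1 = y.1 → dstar x y ≤ M := by
    intro x y hxy
    have h := hp0 (x, y) (Finset.mem_univ _)
    simpa [hgfun, hxy] using h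
  have key : ∀ x y : Sc × Su, x.1 = y.1 → dstar x y ≤ c * M := by
    intro x y hxy
    rw [hfix, hd0c x y hxy, mul_zero, zero_add]
    have hW : ∀ a, W1 dstar (P x a) (P y a) ≤ M := by
      intro a
      rw [hPmu x a, hPmu y a, hxy]
      exact myW1_le dstar M hstar.1 hMle (Pc y.1 a) (Pu x.2) (Pu y.2)
        (hPc _ _) (hPu _) (hPu _)
    exact mul_le_mul_of_nonneg_left (myavg_le hW) hc0
  have hMc : M ≤ c * M := by
    by_cases he : p0.1.1 = p0.2.1
    · have hMe : M = dstar p0.1 p0.2 := by simp [hM, hgfun, he]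
      have h2 := key p0.1 p0.2 he
      rw [← hMe] at h2; exact h2
    · have hMe : M = 0 := by simp [hM, hgfun, he]
      rw [hMe]; simp
  have hMz : M ≤ 0 := by nlinarith
  have h1 : dstar si sj ≤ 0 := by nlinarith [key si sj hij]
  exact le_antisymm h1 (hstar.1 si sj)
end
end
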